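/- There are exactly 108 F2-admissible tuples (r, a, δφ, δF, δφF). (These tuples are the complete invariants labelling the connected components of moduli of real non-singular curves A ∈ |−2K_{F₂}| up to Aut(F₂/ℝ), equivalently of real K3 surfaces with degenerate non-symplectic involution of type (2,2,0).) -/

import Mathlib

/-- The invariants `(r, a, δφ, δF, δφF)` of the paper, with `r, a` integers and
`δφ, δF, δφF ∈ {0,1}`, satisfying conditions 0.1--0.7 and I.1--I.8 of the
`𝔽₂` case. -/
def F2Admissible : ℤ × ℤ × ℤ × ℤ × ℤ → Prop
  | (r, a, dphi, dF, dphiF) =>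
    (dphi = 0 ∨ dphi = 1) ∧ (dF = 0 ∨ dF = 1) ∧ (dphiF = 0 ∨ dphiF = 1) ∧
    -- 0.1
    (1 ≤ r ∧ r ≤ 18) ∧ (0 ≤ a ∧ a ≤ r ∧ a ≤ 20 - r) ∧
    -- 0.2
    (r + a ≡ 0 [ZMOD 2]) ∧ (dphi = 0 → r ≡ 2 [ZMOD 4]) ∧
    -- 0.3
    (a = 0 → dphi = 0 ∧ r ≡ 2 [ZMOD 8]) ∧
    -- 0.4
    (a = 1 → (r ≡ 1 [ZMOD 8] ∨ r ≡ 3 [ZMOD 8])) ∧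
    -- 0.5
    (a = 2 ∧ r ≡ 6 [ZMOD 8] → dphi = 0) ∧
    -- 0.6
    (a = r ∧ dphi = 0 → r ≡ 2 [ZMOD 8]) ∧
    -- 0.7
    (a = 20 - r ∧ dphi = 0 → r ≡ 2 [ZMOD 8]) ∧
    -- I.1
    (dphiF = 0 → dF = 0 ∧ dphi = 1 ∧ r ≡ 0 [ZMOD 4]) ∧
    -- I.2
    (a = 20 - r → dF = 0) ∧
    -- I.3
    (a = 20 - r ∧ dphiF = 0 → r ≡ 0 [ZMOD 8]) ∧
    -- I.4
    (a = 18 - r ∧ dF = 1 ∧ dphi = 0 → r ≡ 2 [ZMOD 8]) ∧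
    -- I.5
    (a = 0 → dF = 1) ∧
    -- I.6
    (a = 1 → dF = 1) ∧
    -- I.7
    (a = 2 ∧ dF = 0 ∧ r ≡ 2 [ZMOD 8] → dphi = 0) ∧
    -- I.8
    (a = 2 ∧ dF = 0 ∧ r ≡ 0 [ZMOD 4] → dphiF = 0)

instance : DecidablePred F2Admissible := fun
  | (_, _, _, _, _) => by unfold F2Admissible; infer_instance

-- By 0.1, `a ≤ min r (20 - r) ≤ 10`.
noncomputable def F2InvariantBox : Finset (ℤ × ℤ × ℤ × ℤ × ℤ) :=
  Finset.Icc 1 18 ×ˢ Finset.Icc 0 10 ×ˢ {0, 1} ×ˢ {0, 1} ×ˢ {0, 1}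

theorem F2Admissible.mem_F2InvariantBox {t : ℤ × ℤ × ℤ × ℤ × ℤ} (h : F2Admissible t) :
    t ∈ F2InvariantBox := by
  obtain ⟨r, a, dphi, dF, dphiF⟩ := t
  obtain ⟨hdphi, hdF, hdphiF, ⟨hr₁, hr₂⟩, ⟨ha₀, ha₁, ha₂⟩, -⟩ := h
  simp only [F2InvariantBox, Finset.mem_product, Finset.mem_Icc, Finset.mem_insert,
    Finset.mem_singleton]
  exact ⟨⟨hr₁, hr₂⟩, ⟨ha₀, by omega⟩, hdphi, hdF, hdphiF⟩

theorem setOf_F2Admissible_eq_filter :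
    {t | F2Admissible t} = ↑(F2InvariantBox.filter F2Admissible) := by
  ext t
  simpa using fun h => h.mem_F2InvariantBox

/-- There are exactly 108 `𝔽₂`-admissible tuples `(r, a, δφ, δF, δφF)`:
these label the connected components of moduli of real non-singular curves
`A ∈ |-2K_{𝔽₂}|` up to `Aut(𝔽₂/ℝ)`, equivalently of real K3 surfaces with
degenerate non-symplectic involution of type `(2,2,0)`. -/
theorem card_F2Admissible :
    Set.ncard {t : ℤ × ℤ × ℤ × ℤ × ℤ | F2Admissible t} = 108 := by
  rw [setOf_F2Admissible_eq_filter, Set.ncard_coe_finset]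
  set_option maxRecDepth 10000 in decide
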